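/- For integers 1 ≤ k, l ≤ n with k ≠ l, the orthogonal exponential polynomials satisfy ∫₀^∞ E_{nk}(t) E_{nl}(t) dt = 0, and ∫₀^∞ E_{nk}(t)² dt = 1/(2k); moreover ∫₀^∞ E_{nk}(t) dt = 1/k. -/

import Mathlib

/-!
Expanding in powers of `e^{-t}` and integrating `∫₀^∞ e^{-mt} dt = 1/m` term by term, every
integral becomes a combination of the moments `Σ_i c_{nl,i} / (s + l + i)` of `A_{nl}`, where
`A_{nl}(x) = Σ_i c_{nl,i} x^{l+i}`. By partial fractions (Lagrange interpolation at the nodes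
`-l, …, -n`) this moment equals `(n - s)(n - s - 1)⋯(l + 1 - s) / ((s + l)(s + l + 1)⋯(s + n))`.
Its numerator vanishes at `s = l + 1, …, n`, and `∫ E_{nk} E_{nl}` only involves the moments of
`A_{nl}` at `s = k, …, n`: this gives orthogonality for `l < k`. For `l = k` only the moment at
`s = k` survives, and `∫ E_{nk}` is the moment at `s = 0`; both are ratios of factorials.
-/

open Real MeasureTheory

/-- A-kind orthogonal polynomials. -/
noncomputable def aKind (n k : ℕ) (x : ℝ) : ℝ :=
  ∑ j ∈ Finset.range (n - k + 1),
    (-1 : ℝ) ^ j * ((n - k).choose j : ℝ) * ((n + k + j).choose (n - k) : ℝ) * x ^ (k + j)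

/-- Orthogonal exponential polynomials `E_{nk}(t) = A_{nk}(e^{-t})`. -/
noncomputable def expA (n k : ℕ) (t : ℝ) : ℝ := aKind n k (Real.exp (-t))

open Finset Polynomial
open scoped Nat

theorem Nat.ascFactorial_add_one_eq_mul (b M : ℕ) :
    b.ascFactorial (M + 1) = b * (b + 1).ascFactorial M := by
  rw [Nat.ascFactorial_succ, ← Nat.succ_ascFactorial]

theorem prod_erase_range_succ_sub {R : Type*} [CommRing R] {i M : ℕ} (hi : i ≤ M) :
    ∏ j ∈ (range (M + 1)).erase i, ((j : R) - i) = (-1) ^ i * i ! * (M - i)! := by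
  induction M, hi using Nat.le_induction with
  | base =>
    have hdesc : ∏ j ∈ range i, ((i : R) - j) = i ! := by
      rw [← descPochhammer_eval_eq_prod_range, descPochhammer_eval_eq_descFactorial,
        Nat.descFactorial_self]
    rw [range_add_one, erase_insert notMem_range_self, Nat.sub_self, Nat.factorial_zero,
      Nat.cast_one, mul_one, ← hdesc]
    calc ∏ j ∈ range i, ((j : R) - i) = ∏ j ∈ range i, (-1 * ((i : R) - j)) :=
          prod_congr rfl fun _ _ => by ring
      _ = _ := by rw [prod_mul_distrib, prod_const, card_range]
  | succ M hiM ih =>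
    rw [range_add_one, erase_insert_of_ne (by omega), prod_insert (by simp), ih,
      Nat.sub_add_comm hiM, Nat.factorial_succ]
    push_cast [Nat.cast_sub hiM]
    ring

section PartialFractions

variable {K : Type*} [Field K] [CharZero K]

theorem nodalWeight_range_succ_neg {i M : ℕ} (hi : i ≤ M) :
    Lagrange.nodalWeight (range (M + 1)) (fun j : ℕ => -(j : K)) i
      = (-1) ^ i * M.choose i / M ! := by
  rw [Lagrange.nodalWeight, prod_inv_distrib]
  simp_rw [neg_sub_neg]
  rw [prod_erase_range_succ_sub hi, mul_assoc, mul_inv, ← inv_pow, inv_neg, inv_one,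
    Nat.cast_choose K hi]
  have hM : (M ! : K) ≠ 0 := Nat.cast_ne_zero.2 M.factorial_ne_zero
  field_simp

theorem eval_div_prod_range_succ_add {M : ℕ} {P : K[X]} (hP : P.degree ≤ M) {x : K}
    (hx : ∀ i ≤ M, x + i ≠ 0) :
    P.eval x / ∏ i ∈ range (M + 1), (x + i)
      = ∑ i ∈ range (M + 1), (-1) ^ i * M.choose i * P.eval (-(i : K)) / (M ! * (x + i)) := by
  have hinj : Set.InjOn (fun j : ℕ => -(j : K)) (range (M + 1)) :=
    fun i _ j _ hij => by simpa using hij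
  have hdeg : P.degree < #(range (M + 1)) := by
    rw [card_range]; exact hP.trans_lt (by exact_mod_cast M.lt_succ_self)
  have hx' : ∀ i ∈ range (M + 1), x ≠ -(i : K) := fun i hi h =>
    hx i (Nat.lt_succ_iff.1 (mem_range.1 hi)) (by rw [h, neg_add_cancel])
  have hQ : ∏ i ∈ range (M + 1), (x + i) ≠ 0 :=
    prod_ne_zero_iff.2 fun i hi => hx i (Nat.lt_succ_iff.1 (mem_range.1 hi))
  rw [congrArg (eval x) (Lagrange.eq_interpolate hinj hdeg),
    Lagrange.eval_interpolate_not_at_node _ hx', Lagrange.eval_nodal]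
  simp_rw [sub_neg_eq_add]
  rw [mul_div_cancel_left₀ _ hQ]
  refine sum_congr rfl fun i hi => ?_
  rw [nodalWeight_range_succ_neg (Nat.lt_succ_iff.1 (mem_range.1 hi))]
  field_simp

end PartialFractions

theorem integrableOn_exp_neg_pow {m : ℕ} (hm : 0 < m) :
    IntegrableOn (fun t => exp (-t) ^ m) (Set.Ioi 0) := by
  simp_rw [← Real.exp_nat_mul, mul_neg, ← neg_mul]
  exact integrableOn_exp_mul_Ioi (by simpa using hm) 0

theorem integral_exp_neg_pow {m : ℕ} (hm : 0 < m) :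
    ∫ t in Set.Ioi (0 : ℝ), exp (-t) ^ m = 1 / m := by
  simp_rw [← Real.exp_nat_mul, mul_neg, ← neg_mul]
  rw [integral_exp_mul_Ioi (by simpa using hm)]
  simp

theorem integral_sum_mul_exp_neg_pow {ι : Type*} (s : Finset ι) (a : ι → ℝ) (e : ι → ℕ)
    (he : ∀ i ∈ s, 0 < e i) :
    ∫ t in Set.Ioi (0 : ℝ), ∑ i ∈ s, a i * exp (-t) ^ e i = ∑ i ∈ s, a i / e i := by
  rw [integral_finsetSum s fun i hi => (integrableOn_exp_neg_pow (he i hi)).const_mul (a i)]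
  refine sum_congr rfl fun i hi => ?_
  rw [integral_const_mul, integral_exp_neg_pow (he i hi), mul_one_div]

noncomputable def aKindCoeff (n k j : ℕ) : ℝ :=
  (-1) ^ j * ((n - k).choose j : ℝ) * ((n + k + j).choose (n - k) : ℝ)

/-- For `s + l > 0` this is the moment `∫₀¹ A_{nl}(x) x^(s-1) dx`. -/
noncomputable def aKindMoment (n l : ℕ) (s : ℝ) : ℝ :=
  ∑ i ∈ range (n - l + 1), aKindCoeff n l i / (s + l + i)

theorem aKindMoment_eq {n l : ℕ} {s : ℝ} (hs : ∀ i ≤ n - l, s + l + i ≠ 0) :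
    aKindMoment n l s
      = (descPochhammer ℝ (n - l)).eval (n - s) / ∏ i ∈ range (n - l + 1), (s + l + i) := by
  simp only [aKindMoment, aKindCoeff]
  set M := n - l
  set P : ℝ[X] := (descPochhammer ℝ M).comp (C ((n : ℝ) + l) - X)
  have hP : P.degree ≤ M := by
    refine degree_le_of_natDegree_le ?_
    rw [natDegree_comp, descPochhammer_natDegree, ← neg_sub, natDegree_neg, natDegree_X_sub_C,
      mul_one]
  have hPeval (x : ℝ) : P.eval x = (descPochhammer ℝ M).eval (n + l - x) := by
    simp [P, eval_comp]
  have key := eval_div_prod_range_succ_add hP (x := s + l) hs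
  rw [hPeval, add_sub_add_right_eq_sub] at key
  rw [key]
  refine sum_congr rfl fun i _ => ?_
  have hM : (M ! : ℝ) ≠ 0 := Nat.cast_ne_zero.2 M.factorial_ne_zero
  rw [hPeval, sub_neg_eq_add, ← Nat.cast_add, ← Nat.cast_add,
    descPochhammer_eval_eq_descFactorial, Nat.descFactorial_eq_factorial_mul_choose]
  push_cast
  field_simp

theorem aKindMoment_natCast {n l m : ℕ} (hml : 0 < m + l) (hm : m ≤ n) :
    aKindMoment n l m
      = ((n - m).descFactorial (n - l) : ℝ) / (m + l).ascFactorial (n - l + 1) := by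
  rw [aKindMoment_eq fun i _ => by exact_mod_cast (by omega : m + l + i ≠ 0), ← Nat.cast_sub hm,
    descPochhammer_eval_eq_descFactorial, Nat.ascFactorial_eq_prod_range]
  push_cast
  rfl

theorem integral_expA {n k : ℕ} (hk : 0 < k) :
    ∫ t in Set.Ioi (0 : ℝ), expA n k t = aKindMoment n k 0 := by
  change ∫ t in Set.Ioi (0 : ℝ),
    ∑ j ∈ range (n - k + 1), aKindCoeff n k j * exp (-t) ^ (k + j) = _
  rw [integral_sum_mul_exp_neg_pow _ _ _ fun j _ => by omega, aKindMoment]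
  push_cast
  simp_rw [zero_add]

theorem integral_expA_mul_expA {n k l : ℕ} (hkl : 0 < k + l) :
    ∫ t in Set.Ioi (0 : ℝ), expA n k t * expA n l t
      = ∑ j ∈ range (n - k + 1), aKindCoeff n k j * aKindMoment n l (k + j : ℕ) := by
  have hprod (t : ℝ) : expA n k t * expA n l t
      = ∑ p ∈ range (n - k + 1) ×ˢ range (n - l + 1),
          aKindCoeff n k p.1 * aKindCoeff n l p.2 * exp (-t) ^ (k + p.1 + (l + p.2)) := by
    rw [expA, expA, aKind, aKind, sum_mul_sum, sum_product]
    refine sum_congr rfl fun j _ => sum_congr rfl fun i _ => ?_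
    simp only [aKindCoeff]
    ring
  simp_rw [hprod]
  rw [integral_sum_mul_exp_neg_pow _ _ _ fun p _ => by omega, sum_product]
  refine sum_congr rfl fun j _ => ?_
  rw [aKindMoment, mul_sum]
  refine sum_congr rfl fun i _ => ?_
  push_cast
  ring

theorem integral_expA_mul_expA_of_lt {n k l : ℕ} (hlk : l < k) (hkn : k ≤ n) :
    ∫ t in Set.Ioi (0 : ℝ), expA n k t * expA n l t = 0 := by
  rw [integral_expA_mul_expA (by omega)]
  refine sum_eq_zero fun j hj => ?_
  have hjn : k + j ≤ n := by have := mem_range.1 hj; omega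
  rw [aKindMoment_natCast (by omega) hjn, Nat.descFactorial_eq_zero_iff_lt.2 (by omega)]
  simp

theorem integral_expA_mul_self {n k : ℕ} (hk : 0 < k) (hkn : k ≤ n) :
    ∫ t in Set.Ioi (0 : ℝ), expA n k t * expA n k t = 1 / (2 * k) := by
  rw [integral_expA_mul_expA (by omega), sum_eq_single 0 (fun j hj hj0 => ?_) (by simp)]
  · obtain ⟨M, rfl⟩ : ∃ M, n = k + M := ⟨n - k, by omega⟩
    rw [aKindMoment_natCast (by omega) (by omega), aKindCoeff]
    simp only [Nat.add_sub_cancel_left, add_zero, Nat.choose_zero_right, Nat.descFactorial_self,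
      Nat.ascFactorial_add_one_eq_mul, Nat.ascFactorial_eq_factorial_mul_choose,
      add_right_comm k M k]
    have hchoose : ((k + k + M).choose M : ℝ) ≠ 0 := by
      exact_mod_cast (Nat.choose_pos (by omega)).ne'
    push_cast
    field_simp
    ring
  · have hjn : k + j ≤ n := by have := mem_range.1 hj; omega
    rw [aKindMoment_natCast (by omega) hjn, Nat.descFactorial_eq_zero_iff_lt.2 (by omega)]
    simp

theorem integral_expA_eq {n k : ℕ} (hk : 0 < k) (hkn : k ≤ n) :
    ∫ t in Set.Ioi (0 : ℝ), expA n k t = 1 / k := by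
  obtain ⟨M, rfl⟩ : ∃ M, n = k + M := ⟨n - k, by omega⟩
  rw [integral_expA hk, ← Nat.cast_zero, aKindMoment_natCast (by omega) (Nat.zero_le _)]
  simp only [Nat.add_sub_cancel_left, Nat.sub_zero, zero_add, Nat.ascFactorial_add_one_eq_mul,
    ← Nat.add_descFactorial_eq_ascFactorial]
  have : ((k + M).descFactorial M : ℝ) ≠ 0 := by
    exact_mod_cast (Nat.descFactorial_pos.2 (by omega)).ne'
  push_cast
  field_simp

theorem stmt_19_general (n k l : ℕ) (hk1 : 1 ≤ k) (hk : k ≤ n) (hl : l ≤ n) :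
    (k ≠ l → ∫ t in Set.Ioi (0 : ℝ), expA n k t * expA n l t = 0) ∧
    (∫ t in Set.Ioi (0 : ℝ), expA n k t * expA n k t = 1 / (2 * k)) ∧
    (∫ t in Set.Ioi (0 : ℝ), expA n k t = 1 / k) := by
  refine ⟨fun hkl => ?_, integral_expA_mul_self hk1 hk, integral_expA_eq hk1 hk⟩
  rcases hkl.lt_or_gt with hlt | hgt
  · simp_rw [mul_comm (expA n k _)]
    exact integral_expA_mul_expA_of_lt hlt hl
  · exact integral_expA_mul_expA_of_lt hgt hk

theorem stmt_19 (n k l : ℕ) (hk1 : 1 ≤ k) (hk : k ≤ n) (hl1 : 1 ≤ l) (hl : l ≤ n) :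
    (k ≠ l → ∫ t in Set.Ioi (0 : ℝ), expA n k t * expA n l t = 0) ∧
    (∫ t in Set.Ioi (0 : ℝ), expA n k t * expA n k t = 1 / (2 * k)) ∧
    (∫ t in Set.Ioi (0 : ℝ), expA n k t = 1 / k) :=
  stmt_19_general n k l hk1 hk hl
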